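/- arXiv:2301.07819 — 2 statements merged into one kernel-verified Lean document; each statement's English description precedes it below -/
import Mathlib

section
/- Let α ∈ (0,1) and F_μ be an α-stable Lévy measure on ℝ^d with polar decomposition over a finite measure μ on the unit sphere. For every φ ∈ C_b³(ℝ^d) (bounded with bounded derivatives up to order 3) and all x, x' ∈ ℝ^d and δ ∈ (0,1), we have ∫_{ℝ^d} |δ_λ φ(x') − δ_λ φ(x)| F_μ(dλ) ≤ K_α (4‖Dφ‖_∞^δ ‖φ‖_∞^{1−δ} + 2‖D²φ‖_∞^δ ‖Dφ‖_∞^{1−δ}) |x'−x|^δ, where δ_λ φ(x) := φ(x+λ) − φ(x) and K_α := ∫_{ℝ^d} (|λ| ∧ 1) F_μ(dλ). -/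
/-!
Write `h = x' - x`. The second difference `Δ = Δ_[λ] φ x' - Δ_[λ] φ x` is bounded by `4‖φ‖_∞` and
`2‖Dφ‖_∞ ‖λ‖` (two first differences in `λ`), and by `2‖Dφ‖_∞ ‖h‖` and `‖D²φ‖_∞ ‖λ‖ ‖h‖` (mean value
theorem in `x` for `Δ_[λ] φ`, whose derivative is `Δ_[λ] Dφ`). Interpolating `a ≤ min(A, B)` as
`a ≤ B^δ A^(1-δ)` gives `Δ ≲ ‖h‖^δ` for large `λ` and `Δ ≲ ‖λ‖ ‖h‖^δ` for small `λ`, i.e.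
`Δ ≤ (‖λ‖ ∧ 1) · C ‖h‖^δ`, and integrating against `F` produces the factor `K_α`.
-/

open MeasureTheory Set
open scoped fwdDiff

namespace Real

lemma rpow_mul_rpow_one_sub {x : ℝ} (hx : 0 ≤ x) (δ : ℝ) : x ^ δ * x ^ (1 - δ) = x := by
  rw [← rpow_add' hx (by norm_num), add_sub_cancel, rpow_one]

lemma le_mul_rpow_mul_rpow_of_le {a c A B δ : ℝ} (ha : 0 ≤ a) (hc : 0 ≤ c) (hA : 0 ≤ A)
    (hB : 0 ≤ B) (hδ0 : 0 ≤ δ) (hδ1 : δ ≤ 1) (haA : a ≤ c * A) (haB : a ≤ c * B) :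
    a ≤ c * (B ^ δ * A ^ (1 - δ)) :=
  calc a = a ^ δ * a ^ (1 - δ) := (rpow_mul_rpow_one_sub ha δ).symm
    _ ≤ (c * B) ^ δ * (c * A) ^ (1 - δ) :=
      mul_le_mul (rpow_le_rpow ha haB hδ0) (rpow_le_rpow ha haA (sub_nonneg.2 hδ1))
        (rpow_nonneg ha _) (rpow_nonneg (ha.trans haB) _)
    _ = (c ^ δ * c ^ (1 - δ)) * (B ^ δ * A ^ (1 - δ)) := by
      rw [mul_rpow hc hB, mul_rpow hc hA]; ring
    _ = c * (B ^ δ * A ^ (1 - δ)) := by rw [rpow_mul_rpow_one_sub hc]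

end Real

lemma norm_fwdDiff_le_of_norm_le {M G : Type*} [AddCommMonoid M] [SeminormedAddCommGroup G]
    {f : M → G} {C : ℝ} (hC : ∀ y, ‖f y‖ ≤ C) (h y : M) : ‖Δ_[h] f y‖ ≤ 2 * C :=
  calc ‖f (y + h) - f y‖ ≤ ‖f (y + h)‖ + ‖f y‖ := norm_sub_le _ _
    _ ≤ 2 * C := by linarith [hC (y + h), hC y]

section FwdDiff

variable {E F : Type*} [NormedAddCommGroup E] [NormedSpace ℝ E]
  [NormedAddCommGroup F] [NormedSpace ℝ F] {f : E → F} {C : ℝ}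

lemma norm_fderiv_fderiv (f : E → F) (x : E) :
    ‖fderiv ℝ (fderiv ℝ f) x‖ = ‖iteratedFDeriv ℝ 2 f x‖ := by
  rw [← norm_iteratedFDeriv_one, norm_iteratedFDeriv_fderiv]

lemma Differentiable.norm_sub_le_of_norm_fderiv_le (hf : Differentiable ℝ f)
    (hC : ∀ y, ‖fderiv ℝ f y‖ ≤ C) (x y : E) : ‖f y - f x‖ ≤ C * ‖y - x‖ :=
  convex_univ.norm_image_sub_le_of_norm_fderiv_le (fun z _ => hf z) (fun z _ => hC z)
    (mem_univ x) (mem_univ y)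

lemma Differentiable.norm_fwdDiff_le (hf : Differentiable ℝ f)
    (hC : ∀ y, ‖fderiv ℝ f y‖ ≤ C) (h y : E) : ‖Δ_[h] f y‖ ≤ C * ‖h‖ := by
  simpa [fwdDiff] using hf.norm_sub_le_of_norm_fderiv_le hC y (y + h)

lemma Differentiable.hasFDerivAt_fwdDiff (hf : Differentiable ℝ f) (h y : E) :
    HasFDerivAt (Δ_[h] f) (Δ_[h] (fderiv ℝ f) y) y :=
  ((hasFDerivAt_comp_add_right h).2 (hf (y + h)).hasFDerivAt).sub (hf y).hasFDerivAt

lemma Differentiable.norm_fwdDiff_sub_fwdDiff_le (hf : Differentiable ℝ f) {h : E}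
    (hC : ∀ y, ‖Δ_[h] (fderiv ℝ f) y‖ ≤ C) (x x' : E) :
    ‖Δ_[h] f x' - Δ_[h] f x‖ ≤ C * ‖x' - x‖ :=
  Differentiable.norm_sub_le_of_norm_fderiv_le
    (fun y => (hf.hasFDerivAt_fwdDiff h y).differentiableAt)
    (fun y => (hf.hasFDerivAt_fwdDiff h y).fderiv ▸ hC y) x x'

variable {M0 M1 M2 δ : ℝ} (hδ0 : 0 ≤ δ) (hδ1 : δ ≤ 1) (x x' l : E)
include hδ0 hδ1

lemma Differentiable.norm_fwdDiff_sub_fwdDiff_le_holder (hf : Differentiable ℝ f)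
    (h0 : ∀ y, ‖f y‖ ≤ M0) (h1 : ∀ y, ‖fderiv ℝ f y‖ ≤ M1) :
    ‖Δ_[l] f x' - Δ_[l] f x‖ ≤ 4 * M1 ^ δ * M0 ^ (1 - δ) * ‖x' - x‖ ^ δ := by
  have hM0 : 0 ≤ M0 := (norm_nonneg _).trans (h0 0)
  have hM1 : 0 ≤ M1 := (norm_nonneg _).trans (h1 0)
  have bound_f : ‖Δ_[l] f x' - Δ_[l] f x‖ ≤ 4 * M0 := by
    linarith [norm_sub_le (Δ_[l] f x') (Δ_[l] f x), norm_fwdDiff_le_of_norm_le h0 l x',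
      norm_fwdDiff_le_of_norm_le h0 l x]
  have bound_Df : ‖Δ_[l] f x' - Δ_[l] f x‖ ≤ 4 * (M1 * ‖x' - x‖) := by
    have := hf.norm_fwdDiff_sub_fwdDiff_le (norm_fwdDiff_le_of_norm_le h1 l) x x'
    nlinarith [norm_nonneg (x' - x)]
  calc ‖Δ_[l] f x' - Δ_[l] f x‖ ≤ 4 * ((M1 * ‖x' - x‖) ^ δ * M0 ^ (1 - δ)) :=
        Real.le_mul_rpow_mul_rpow_of_le (norm_nonneg _) (by norm_num) hM0 (by positivity)
          hδ0 hδ1 bound_f bound_Df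
    _ = 4 * M1 ^ δ * M0 ^ (1 - δ) * ‖x' - x‖ ^ δ := by
      rw [Real.mul_rpow hM1 (norm_nonneg _)]; ring

lemma Differentiable.norm_fwdDiff_sub_fwdDiff_le_norm_mul_holder (hf : Differentiable ℝ f)
    (hf' : Differentiable ℝ (fderiv ℝ f)) (h1 : ∀ y, ‖fderiv ℝ f y‖ ≤ M1)
    (h2 : ∀ y, ‖iteratedFDeriv ℝ 2 f y‖ ≤ M2) :
    ‖Δ_[l] f x' - Δ_[l] f x‖ ≤ ‖l‖ * (2 * M2 ^ δ * M1 ^ (1 - δ) * ‖x' - x‖ ^ δ) := by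
  have hM1 : 0 ≤ M1 := (norm_nonneg _).trans (h1 0)
  have hM2 : 0 ≤ M2 := (norm_nonneg _).trans (h2 0)
  have bound_Df : ‖Δ_[l] f x' - Δ_[l] f x‖ ≤ 2 * ‖l‖ * M1 := by
    linarith [norm_sub_le (Δ_[l] f x') (Δ_[l] f x), hf.norm_fwdDiff_le h1 l x',
      hf.norm_fwdDiff_le h1 l x]
  have bound_D2f : ‖Δ_[l] f x' - Δ_[l] f x‖ ≤ 2 * ‖l‖ * (M2 * ‖x' - x‖) := by
    have := hf.norm_fwdDiff_sub_fwdDiff_le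
      (hf'.norm_fwdDiff_le (fun y => (norm_fderiv_fderiv f y).trans_le (h2 y)) l) x x'
    nlinarith [mul_nonneg (mul_nonneg hM2 (norm_nonneg l)) (norm_nonneg (x' - x))]
  calc ‖Δ_[l] f x' - Δ_[l] f x‖ ≤ 2 * ‖l‖ * ((M2 * ‖x' - x‖) ^ δ * M1 ^ (1 - δ)) :=
        Real.le_mul_rpow_mul_rpow_of_le (norm_nonneg _) (by positivity) hM1 (by positivity)
          hδ0 hδ1 bound_Df bound_D2f
    _ = ‖l‖ * (2 * M2 ^ δ * M1 ^ (1 - δ) * ‖x' - x‖ ^ δ) := by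
      rw [Real.mul_rpow hM2 (norm_nonneg _)]; ring

lemma ContDiff.norm_fwdDiff_sub_fwdDiff_le_min_mul (hf : ContDiff ℝ 2 f)
    (h0 : ∀ y, ‖f y‖ ≤ M0) (h1 : ∀ y, ‖fderiv ℝ f y‖ ≤ M1)
    (h2 : ∀ y, ‖iteratedFDeriv ℝ 2 f y‖ ≤ M2) :
    ‖Δ_[l] f x' - Δ_[l] f x‖ ≤
      min ‖l‖ 1 * ((4 * M1 ^ δ * M0 ^ (1 - δ) + 2 * M2 ^ δ * M1 ^ (1 - δ)) * ‖x' - x‖ ^ δ) := by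
  have hdiff : Differentiable ℝ f := hf.differentiable (by norm_num)
  have hdiff' : Differentiable ℝ (fderiv ℝ f) :=
    (hf.fderiv_right (m := 1) (by norm_num)).differentiable (by norm_num)
  have large := hdiff.norm_fwdDiff_sub_fwdDiff_le_holder hδ0 hδ1 x x' l h0 h1
  have small := hdiff.norm_fwdDiff_sub_fwdDiff_le_norm_mul_holder hδ0 hδ1 x x' l hdiff' h1 h2
  have hM0 : 0 ≤ M0 := (norm_nonneg _).trans (h0 0)
  have hM1 : 0 ≤ M1 := (norm_nonneg _).trans (h1 0)
  have hM2 : 0 ≤ M2 := (norm_nonneg _).trans (h2 0)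
  have hP : 0 ≤ 4 * M1 ^ δ * M0 ^ (1 - δ) * ‖x' - x‖ ^ δ := by positivity
  have hQ : 0 ≤ 2 * M2 ^ δ * M1 ^ (1 - δ) * ‖x' - x‖ ^ δ := by positivity
  rcases le_total ‖l‖ 1 with hl | hl
  · rw [min_eq_left hl]
    nlinarith [norm_nonneg l]
  · rw [min_eq_right hl]
    linarith

end FwdDiff

lemma MeasureTheory.lintegral_ofReal_le_ofReal_mul {X : Type*} [MeasurableSpace X]
    {ν : Measure X} {f g : X → ℝ} {K C : ℝ} (hC : 0 ≤ C) (hfg : ∀ x, f x ≤ g x * C)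
    (hg : ∫⁻ x, ENNReal.ofReal (g x) ∂ν = ENNReal.ofReal K) :
    ∫⁻ x, ENNReal.ofReal (f x) ∂ν ≤ ENNReal.ofReal (K * C) :=
  calc ∫⁻ x, ENNReal.ofReal (f x) ∂ν ≤ ∫⁻ x, ENNReal.ofReal (g x) * ENNReal.ofReal C ∂ν :=
        lintegral_mono fun x => (ENNReal.ofReal_le_ofReal (hfg x)).trans_eq
          (ENNReal.ofReal_mul' hC)
    _ = ENNReal.ofReal (K * C) := by
      rw [lintegral_mul_const' _ _ ENNReal.ofReal_ne_top, hg, ENNReal.ofReal_mul' hC]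

theorem stmt_1_general {d : ℕ} (δ : ℝ) (hδ : δ ∈ Set.Ioo (0:ℝ) 1)
    (F : Measure (EuclideanSpace ℝ (Fin d)))
    (φ : EuclideanSpace ℝ (Fin d) → ℝ) (hφ : ContDiff ℝ 3 φ)
    (M0 M1 M2 Kα : ℝ)
    (hM0 : ∀ x, |φ x| ≤ M0)
    (hM1 : ∀ x, ‖fderiv ℝ φ x‖ ≤ M1)
    (hM2 : ∀ x, ‖iteratedFDeriv ℝ 2 φ x‖ ≤ M2)
    (hK : ∫⁻ l, ENNReal.ofReal (min ‖l‖ 1) ∂F = ENNReal.ofReal Kα)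
    (x x' : EuclideanSpace ℝ (Fin d)) :
    ∫⁻ l, ENNReal.ofReal |(φ (x' + l) - φ x') - (φ (x + l) - φ x)| ∂F
      ≤ ENNReal.ofReal
          (Kα * (4 * M1 ^ δ * M0 ^ (1 - δ) + 2 * M2 ^ δ * M1 ^ (1 - δ)) * ‖x' - x‖ ^ δ) := by
  have hM0' : 0 ≤ M0 := (abs_nonneg _).trans (hM0 0)
  have hM1' : 0 ≤ M1 := (norm_nonneg _).trans (hM1 0)
  have hM2' : 0 ≤ M2 := (norm_nonneg _).trans (hM2 0)
  have pointwise := fun l => (hφ.of_le (by norm_num)).norm_fwdDiff_sub_fwdDiff_le_min_mul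
    hδ.1.le hδ.2.le x x' l (fun y => (Real.norm_eq_abs _).trans_le (hM0 y)) hM1 hM2
  rw [mul_assoc]
  exact lintegral_ofReal_le_ofReal_mul (by positivity) pointwise hK

/-- For `α ∈ (0,1)`, an α-stable Lévy measure `F_μ`, `φ ∈ C_b³(ℝ^d)` with
`‖φ‖_∞ ≤ M0`, `‖Dφ‖_∞ ≤ M1`, `‖D²φ‖_∞ ≤ M2`, and `δ ∈ (0,1)`:
`∫ |δ_λφ(x') − δ_λφ(x)| dF_μ ≤ K_α (4 M1^δ M0^{1-δ} + 2 M2^δ M1^{1-δ}) |x'-x|^δ`,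
where `δ_λφ(x) = φ(x+λ) − φ(x)` and `K_α = ∫ (|λ| ∧ 1) dF_μ`. -/
theorem stmt_1 {d : ℕ} (α δ : ℝ) (hα : α ∈ Set.Ioo (0:ℝ) 1) (hδ : δ ∈ Set.Ioo (0:ℝ) 1)
    (μ F : Measure (EuclideanSpace ℝ (Fin d))) [IsFiniteMeasure μ]
    (hμ : μ (Metric.sphere (0 : EuclideanSpace ℝ (Fin d)) 1)ᶜ = 0)
    (hF : ∀ B : Set (EuclideanSpace ℝ (Fin d)), MeasurableSet B →
      F B = ∫⁻ z, (∫⁻ r in Set.Ioi (0:ℝ),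
        Set.indicator B (fun _ => ENNReal.ofReal (r ^ (-1 - α))) (r • z)) ∂μ)
    (φ : EuclideanSpace ℝ (Fin d) → ℝ) (hφ : ContDiff ℝ 3 φ)
    (M0 M1 M2 Kα : ℝ)
    (hM0 : ∀ x, |φ x| ≤ M0) (hM0' : 0 ≤ M0)
    (hM1 : ∀ x, ‖fderiv ℝ φ x‖ ≤ M1) (hM1' : 0 ≤ M1)
    (hM2 : ∀ x, ‖iteratedFDeriv ℝ 2 φ x‖ ≤ M2) (hM2' : 0 ≤ M2)
    (hK : ∫⁻ l, ENNReal.ofReal (min ‖l‖ 1) ∂F = ENNReal.ofReal Kα) (hK' : 0 ≤ Kα)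
    (x x' : EuclideanSpace ℝ (Fin d)) :
    ∫⁻ l, ENNReal.ofReal |(φ (x' + l) - φ x') - (φ (x + l) - φ x)| ∂F
      ≤ ENNReal.ofReal
          (Kα * (4 * M1 ^ δ * M0 ^ (1 - δ) + 2 * M2 ^ δ * M1 ^ (1 - δ)) * ‖x' - x‖ ^ δ) :=
  stmt_1_general δ hδ F φ hφ M0 M1 M2 Kα hM0 hM1 hM2 hK x x'
end

section
/- Let α = 1 and F_μ be a 1-stable Lévy measure on ℝ^d with polar decomposition over a finite measure μ on the unit sphere. For every φ ∈ C_b³(ℝ^d), all x, x' ∈ ℝ^d and δ ∈ (0,1), we have ∫_{ℝ^d} |δ_λ¹ φ(x') − δ_λ¹ φ(x)| F_μ(dλ) ≤ K₁ (4‖Dφ‖_∞^δ ‖φ‖_∞^{1−δ} + 2‖D³φ‖_∞^δ ‖D²φ‖_∞^{1−δ}) |x'−x|^δ, where δ_λ¹ φ(x) := φ(x+λ) − φ(x) − ⟨Dφ(x), λ 1_{|λ|≤1}⟩ and K₁ := ∫_{ℝ^d} (|λ|² ∧ 1) F_μ(dλ). -/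
/-!
With `h = x' - x`, a small jump `‖l‖ ≤ 1` makes the difference of compensated increments the
second-order Taylor remainder of `φ (· + h) - φ`, bounded by `M3 ‖h‖ ‖l‖²` and by `2 M2 ‖l‖²`.
For a large jump the compensator vanishes and the difference is bounded by `2 M1 ‖h‖` and by
`4 M0`. Interpolating each pair through `min (a t) b ≤ a^δ b^(1-δ) t^δ` gives the pointwise bound
`C ‖h‖^δ (‖l‖² ∧ 1)`, whose integral against `F` is `C ‖h‖^δ K1`.
-/

open MeasureTheory

section MeanValue

variable {E G : Type*} [NormedAddCommGroup E] [NormedSpace ℝ E]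
  [NormedAddCommGroup G] [NormedSpace ℝ G]

theorem norm_sub_le_of_forall_hasFDerivAt {f : E → G} {f' : E → E →L[ℝ] G} {C : ℝ}
    (hf : ∀ z, HasFDerivAt f (f' z) z) (bound : ∀ z, ‖f' z‖ ≤ C) (a b : E) :
    ‖f a - f b‖ ≤ C * ‖a - b‖ :=
  convex_univ.norm_image_sub_le_of_norm_hasFDerivWithin_le
    (fun z _ => (hf z).hasFDerivWithinAt) (fun z _ => bound z) trivial trivial

theorem norm_taylor_remainder_le {f : E → G} {f' : E → E →L[ℝ] G} {K : ℝ} (hK : 0 ≤ K)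
    (hf : ∀ z, HasFDerivAt f (f' z) z) (hf' : ∀ a b, ‖f' a - f' b‖ ≤ K * ‖a - b‖) (y l : E) :
    ‖f (y + l) - f y - f' y l‖ ≤ K * ‖l‖ ^ 2 := by
  have bound : ∀ z ∈ Metric.closedBall y ‖l‖, ‖f' z - f' y‖ ≤ K * ‖l‖ := fun z hz =>
    (hf' z y).trans (mul_le_mul_of_nonneg_left (mem_closedBall_iff_norm.1 hz) hK)
  have := (convex_closedBall y ‖l‖).norm_image_sub_le_of_norm_hasFDerivWithin_le'
    (fun z _ => (hf z).hasFDerivWithinAt) bound (Metric.mem_closedBall_self (norm_nonneg l))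
    (by simp : y + l ∈ Metric.closedBall y ‖l‖)
  simpa [sq, mul_assoc] using this

theorem norm_taylor_remainder_shift_sub_le {f : E → G} {C : ℝ} (hC : 0 ≤ C)
    (hf : Differentiable ℝ f) (hf' : Differentiable ℝ (fderiv ℝ f))
    (hf'' : ∀ a b, ‖fderiv ℝ (fderiv ℝ f) a - fderiv ℝ (fderiv ℝ f) b‖ ≤ C * ‖a - b‖)
    (y h l : E) :
    ‖(f (y + h + l) - f (y + h) - fderiv ℝ f (y + h) l) - (f (y + l) - f y - fderiv ℝ f y l)‖
      ≤ C * ‖h‖ * ‖l‖ ^ 2 := by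
  have hψ : ∀ z, HasFDerivAt (fun z => f (z + h) - f z)
      (fderiv ℝ f (z + h) - fderiv ℝ f z) z := fun z =>
    ((hasFDerivAt_comp_add_right h).2 (hf (z + h)).hasFDerivAt).sub (hf z).hasFDerivAt
  have hψ' : ∀ z, HasFDerivAt (fun z => fderiv ℝ f (z + h) - fderiv ℝ f z)
      (fderiv ℝ (fderiv ℝ f) (z + h) - fderiv ℝ (fderiv ℝ f) z) z := fun z =>
    ((hasFDerivAt_comp_add_right h).2 (hf' (z + h)).hasFDerivAt).sub (hf' z).hasFDerivAt
  have hψ'_lip : ∀ a b,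
      ‖(fderiv ℝ f (a + h) - fderiv ℝ f a) - (fderiv ℝ f (b + h) - fderiv ℝ f b)‖
        ≤ C * ‖h‖ * ‖a - b‖ := by
    refine norm_sub_le_of_forall_hasFDerivAt hψ' fun z => ?_
    simpa using hf'' (z + h) z
  have := norm_taylor_remainder_le (by positivity) hψ hψ'_lip y l
  convert this using 2
  simp only [sub_apply, add_right_comm y h l]
  abel

theorem norm_fderiv_sub_le_of_norm_iteratedFDeriv_two_le {f : E → G} {C : ℝ}
    (hf : ContDiff ℝ 2 f) (hC : ∀ z, ‖iteratedFDeriv ℝ 2 f z‖ ≤ C) (a b : E) :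
    ‖fderiv ℝ f a - fderiv ℝ f b‖ ≤ C * ‖a - b‖ := by
  have hf' : Differentiable ℝ (fderiv ℝ f) :=
    (hf.fderiv_right (m := 1) (by norm_num)).differentiable (by norm_num)
  refine norm_sub_le_of_forall_hasFDerivAt (fun z => (hf' z).hasFDerivAt) (fun z => ?_) a b
  rw [← norm_iteratedFDeriv_one, norm_iteratedFDeriv_fderiv]
  exact hC z

end MeanValue

theorem min_le_rpow_mul_rpow {a b δ : ℝ} (ha : 0 ≤ a) (hb : 0 ≤ b) (hδ0 : 0 ≤ δ)
    (hδ1 : δ ≤ 1) : min a b ≤ a ^ δ * b ^ (1 - δ) := by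
  have hm : 0 ≤ min a b := le_min ha hb
  calc min a b = min a b ^ δ * min a b ^ (1 - δ) := by
        rw [← Real.rpow_add' hm (by norm_num), add_sub_cancel, Real.rpow_one]
    _ ≤ a ^ δ * b ^ (1 - δ) := by
        gcongr
        · exact min_le_left a b
        · exact min_le_right a b

theorem min_mul_le_rpow_mul_rpow_mul_rpow {a t b δ : ℝ} (ha : 0 ≤ a) (ht : 0 ≤ t) (hb : 0 ≤ b)
    (hδ0 : 0 ≤ δ) (hδ1 : δ ≤ 1) : min (a * t) b ≤ a ^ δ * b ^ (1 - δ) * t ^ δ := by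
  calc min (a * t) b ≤ (a * t) ^ δ * b ^ (1 - δ) :=
        min_le_rpow_mul_rpow (mul_nonneg ha ht) hb hδ0 hδ1
    _ = a ^ δ * b ^ (1 - δ) * t ^ δ := by rw [Real.mul_rpow ha ht]; ring

section CompensatedIncrement

variable {E : Type*} [NormedAddCommGroup E] [NormedSpace ℝ E]

/-- The paper's `δ_λ¹ φ(x)`, with `l` for `λ`. -/
noncomputable def compensatedIncrement (φ : E → ℝ) (x l : E) : ℝ :=
  φ (x + l) - φ x - fderiv ℝ φ x (if ‖l‖ ≤ 1 then l else 0)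

theorem abs_compensatedIncrement_sub_le_of_norm_le_one {φ : E → ℝ} (hφ : ContDiff ℝ 3 φ)
    {M2 M3 : ℝ} (hM2 : ∀ x, ‖iteratedFDeriv ℝ 2 φ x‖ ≤ M2)
    (hM3 : ∀ x, ‖iteratedFDeriv ℝ 3 φ x‖ ≤ M3) (x x' l : E) (hl : ‖l‖ ≤ 1) :
    |compensatedIncrement φ x' l - compensatedIncrement φ x l|
      ≤ 2 * min (M3 * ‖x' - x‖) M2 * ‖l‖ ^ 2 := by
  simp only [compensatedIncrement, if_pos hl]
  have hφ1 : Differentiable ℝ φ := hφ.differentiable (by norm_num)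
  have hφ' : ContDiff ℝ 2 (fderiv ℝ φ) := hφ.fderiv_right (by norm_num)
  have hM2' : 0 ≤ M2 := (norm_nonneg _).trans (hM2 x)
  have hM3' : 0 ≤ M3 := (norm_nonneg _).trans (hM3 x)
  have lip2 := norm_fderiv_sub_le_of_norm_iteratedFDeriv_two_le (hφ.of_le (by norm_num)) hM2
  have lip3 := norm_fderiv_sub_le_of_norm_iteratedFDeriv_two_le hφ' fun z =>
    norm_iteratedFDeriv_fderiv.trans_le (hM3 z)
  have taylor : ∀ y, |φ (y + l) - φ y - fderiv ℝ φ y l| ≤ M2 * ‖l‖ ^ 2 := fun y =>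
    norm_taylor_remainder_le hM2' (fun z => (hφ1 z).hasFDerivAt) lip2 y l
  have by_M2 := (abs_sub _ _).trans (add_le_add (taylor x') (taylor x))
  have by_M3 : |(φ (x' + l) - φ x' - fderiv ℝ φ x' l) - (φ (x + l) - φ x - fderiv ℝ φ x l)|
      ≤ M3 * ‖x' - x‖ * ‖l‖ ^ 2 := by
    simpa using norm_taylor_remainder_shift_sub_le hM3' hφ1
      (hφ'.differentiable (by norm_num)) lip3 x (x' - x) l
  have hL : 0 ≤ M3 * ‖x' - x‖ * ‖l‖ ^ 2 := by positivity
  rcases le_total (M3 * ‖x' - x‖) M2 with h | h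
  · rw [min_eq_left h]; linarith
  · rw [min_eq_right h]; linarith

theorem abs_compensatedIncrement_sub_le_of_one_lt {φ : E → ℝ} (hφ : Differentiable ℝ φ)
    {M0 M1 : ℝ} (hM0 : ∀ x, |φ x| ≤ M0) (hM1 : ∀ x, ‖fderiv ℝ φ x‖ ≤ M1) (x x' l : E)
    (hl : 1 < ‖l‖) :
    |compensatedIncrement φ x' l - compensatedIncrement φ x l| ≤ 4 * min (M1 * ‖x' - x‖) M0 := by
  simp only [compensatedIncrement, if_neg hl.not_ge, map_zero, sub_zero]
  have lip : ∀ a b, |φ a - φ b| ≤ M1 * ‖a - b‖ :=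
    norm_sub_le_of_forall_hasFDerivAt (fun z => (hφ z).hasFDerivAt) hM1
  have by_M1 : |(φ (x' + l) - φ x') - (φ (x + l) - φ x)| ≤ 2 * (M1 * ‖x' - x‖) := by
    have h1 := lip (x' + l) (x + l)
    rw [add_sub_add_right_eq_sub] at h1
    have h2 := lip x' x
    rw [abs_le] at h1 h2 ⊢
    constructor <;> linarith
  have by_M0 : |(φ (x' + l) - φ x') - (φ (x + l) - φ x)| ≤ 4 * M0 := by
    have h1 := abs_le.1 (hM0 (x' + l))
    have h2 := abs_le.1 (hM0 x')
    have h3 := abs_le.1 (hM0 (x + l))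
    have h4 := abs_le.1 (hM0 x)
    rw [abs_le]
    constructor <;> linarith [h1.1, h1.2, h2.1, h2.2, h3.1, h3.2, h4.1, h4.2]
  have hM1' : 0 ≤ M1 * ‖x' - x‖ := (abs_nonneg _).trans (lip x' x)
  rcases le_total (M1 * ‖x' - x‖) M0 with h | h
  · rw [min_eq_left h]; linarith
  · rw [min_eq_right h]; linarith

theorem abs_compensatedIncrement_sub_le {φ : E → ℝ} (hφ : ContDiff ℝ 3 φ) {δ : ℝ} (hδ0 : 0 ≤ δ)
    (hδ1 : δ ≤ 1) {M0 M1 M2 M3 : ℝ} (hM0 : ∀ x, |φ x| ≤ M0) (hM1 : ∀ x, ‖fderiv ℝ φ x‖ ≤ M1)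
    (hM2 : ∀ x, ‖iteratedFDeriv ℝ 2 φ x‖ ≤ M2) (hM3 : ∀ x, ‖iteratedFDeriv ℝ 3 φ x‖ ≤ M3)
    (x x' l : E) :
    |compensatedIncrement φ x' l - compensatedIncrement φ x l|
      ≤ (4 * M1 ^ δ * M0 ^ (1 - δ) + 2 * M3 ^ δ * M2 ^ (1 - δ)) * ‖x' - x‖ ^ δ
        * min (‖l‖ ^ 2) 1 := by
  have hM0' : 0 ≤ M0 := (abs_nonneg _).trans (hM0 x)
  have hM1' : 0 ≤ M1 := (norm_nonneg _).trans (hM1 x)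
  have hM2' : 0 ≤ M2 := (norm_nonneg _).trans (hM2 x)
  have hM3' : 0 ≤ M3 := (norm_nonneg _).trans (hM3 x)
  rcases le_or_gt ‖l‖ 1 with hl | hl
  · rw [min_eq_left (pow_le_one₀ (norm_nonneg l) hl)]
    calc _ ≤ 2 * min (M3 * ‖x' - x‖) M2 * ‖l‖ ^ 2 :=
          abs_compensatedIncrement_sub_le_of_norm_le_one hφ hM2 hM3 x x' l hl
      _ ≤ 2 * (M3 ^ δ * M2 ^ (1 - δ) * ‖x' - x‖ ^ δ) * ‖l‖ ^ 2 := by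
          gcongr; exact min_mul_le_rpow_mul_rpow_mul_rpow hM3' (norm_nonneg _) hM2' hδ0 hδ1
      _ ≤ _ := by
          rw [← mul_assoc 2, ← mul_assoc 2]
          gcongr
          exact le_add_of_nonneg_left (by positivity)
  · rw [min_eq_right (one_le_pow₀ hl.le), mul_one]
    calc _ ≤ 4 * min (M1 * ‖x' - x‖) M0 :=
          abs_compensatedIncrement_sub_le_of_one_lt (hφ.differentiable (by norm_num)) hM0 hM1
            x x' l hl
      _ ≤ 4 * (M1 ^ δ * M0 ^ (1 - δ) * ‖x' - x‖ ^ δ) := by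
          gcongr; exact min_mul_le_rpow_mul_rpow_mul_rpow hM1' (norm_nonneg _) hM0' hδ0 hδ1
      _ ≤ _ := by
          rw [← mul_assoc 4, ← mul_assoc 4]
          gcongr
          exact le_add_of_nonneg_right (by positivity)

end CompensatedIncrement

theorem stmt_2_general {d : ℕ} (δ : ℝ) (hδ : δ ∈ Set.Ioo (0:ℝ) 1)
    (F : Measure (EuclideanSpace ℝ (Fin d)))
    (φ : EuclideanSpace ℝ (Fin d) → ℝ) (hφ : ContDiff ℝ 3 φ)
    (M0 M1 M2 M3 K1 : ℝ)
    (hM0 : ∀ x, |φ x| ≤ M0)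
    (hM1 : ∀ x, ‖fderiv ℝ φ x‖ ≤ M1)
    (hM2 : ∀ x, ‖iteratedFDeriv ℝ 2 φ x‖ ≤ M2)
    (hM3 : ∀ x, ‖iteratedFDeriv ℝ 3 φ x‖ ≤ M3)
    (hK : ∫⁻ l, ENNReal.ofReal (min (‖l‖^2) 1) ∂F = ENNReal.ofReal K1)
    (x x' : EuclideanSpace ℝ (Fin d)) :
    ∫⁻ l, ENNReal.ofReal
        |(φ (x' + l) - φ x' - fderiv ℝ φ x' (if ‖l‖ ≤ 1 then l else 0))
          - (φ (x + l) - φ x - fderiv ℝ φ x (if ‖l‖ ≤ 1 then l else 0))| ∂F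
      ≤ ENNReal.ofReal
          (K1 * (4 * M1 ^ δ * M0 ^ (1 - δ) + 2 * M3 ^ δ * M2 ^ (1 - δ)) * ‖x' - x‖ ^ δ) := by
  set C := (4 * M1 ^ δ * M0 ^ (1 - δ) + 2 * M3 ^ δ * M2 ^ (1 - δ)) * ‖x' - x‖ ^ δ
  have hC : 0 ≤ C := by
    have := (abs_nonneg _).trans (hM0 x)
    have := (norm_nonneg _).trans (hM1 x)
    have := (norm_nonneg _).trans (hM2 x)
    have := (norm_nonneg _).trans (hM3 x)
    positivity
  calc _ ≤ ∫⁻ l, ENNReal.ofReal C * ENNReal.ofReal (min (‖l‖ ^ 2) 1) ∂F :=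
        lintegral_mono fun l => by
          rw [← ENNReal.ofReal_mul hC]
          exact ENNReal.ofReal_le_ofReal <| abs_compensatedIncrement_sub_le hφ hδ.1.le hδ.2.le
            hM0 hM1 hM2 hM3 x x' l
    _ = ENNReal.ofReal C * ENNReal.ofReal K1 := by
        rw [lintegral_const_mul' _ _ ENNReal.ofReal_ne_top, hK]
    _ = _ := by rw [← ENNReal.ofReal_mul hC, mul_comm, ← mul_assoc]

/-- For `α = 1`, a 1-stable Lévy measure `F_μ`, `φ ∈ C_b³(ℝ^d)` and `δ ∈ (0,1)`:
`∫ |δ_λ¹φ(x') − δ_λ¹φ(x)| dF_μ ≤ K₁ (4 M1^δ M0^{1-δ} + 2 M3^δ M2^{1-δ}) |x'-x|^δ`,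
where `δ_λ¹φ(x) = φ(x+λ) − φ(x) − ⟨Dφ(x), λ 1_{|λ|≤1}⟩` and `K₁ = ∫ (|λ|² ∧ 1) dF_μ`. -/
theorem stmt_2 {d : ℕ} (δ : ℝ) (hδ : δ ∈ Set.Ioo (0:ℝ) 1)
    (μ F : Measure (EuclideanSpace ℝ (Fin d))) [IsFiniteMeasure μ]
    (hμ : μ (Metric.sphere (0 : EuclideanSpace ℝ (Fin d)) 1)ᶜ = 0)
    (hF : ∀ B : Set (EuclideanSpace ℝ (Fin d)), MeasurableSet B →
      F B = ∫⁻ z, (∫⁻ r in Set.Ioi (0:ℝ),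
        Set.indicator B (fun _ => ENNReal.ofReal (r ^ (-2 : ℝ))) (r • z)) ∂μ)
    (φ : EuclideanSpace ℝ (Fin d) → ℝ) (hφ : ContDiff ℝ 3 φ)
    (M0 M1 M2 M3 K1 : ℝ)
    (hM0 : ∀ x, |φ x| ≤ M0) (hM0' : 0 ≤ M0)
    (hM1 : ∀ x, ‖fderiv ℝ φ x‖ ≤ M1) (hM1' : 0 ≤ M1)
    (hM2 : ∀ x, ‖iteratedFDeriv ℝ 2 φ x‖ ≤ M2) (hM2' : 0 ≤ M2)
    (hM3 : ∀ x, ‖iteratedFDeriv ℝ 3 φ x‖ ≤ M3) (hM3' : 0 ≤ M3)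
    (hK : ∫⁻ l, ENNReal.ofReal (min (‖l‖^2) 1) ∂F = ENNReal.ofReal K1) (hK' : 0 ≤ K1)
    (x x' : EuclideanSpace ℝ (Fin d)) :
    ∫⁻ l, ENNReal.ofReal
        |(φ (x' + l) - φ x' - fderiv ℝ φ x' (if ‖l‖ ≤ 1 then l else 0))
          - (φ (x + l) - φ x - fderiv ℝ φ x (if ‖l‖ ≤ 1 then l else 0))| ∂F
      ≤ ENNReal.ofReal
          (K1 * (4 * M1 ^ δ * M0 ^ (1 - δ) + 2 * M3 ^ δ * M2 ^ (1 - δ)) * ‖x' - x‖ ^ δ) :=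
  stmt_2_general δ hδ F φ hφ M0 M1 M2 M3 K1 hM0 hM1 hM2 hM3 hK x x'
end
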